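/- arXiv:math/0211458 — 2 statements merged into one kernel-verified Lean document; each statement's English description precedes it below -/
import Mathlib

section
/- Let f : [0,T] × (0,1] → ℝ^d be defined by f(t,α) = X_{t,α}, where X is γ-Hölder continuous with γ > 1/2 and X_{t,α} is its mollification as above. Then the area Jacobian J_f = √(|∂_t X_{t,α}|² |∂_α X_{t,α}|² − ⟨∂_t X_{t,α}, ∂_α X_{t,α}⟩²) satisfies J_f(t,α) ≤ C α^{2(γ−1)}, and consequently ∫_{[0,T]×(0,1]} J_f dt dα < ∞. -/
/-!
The Jacobian is bounded by `‖∂_t X‖ ‖∂_α X‖` (drop the inner-product term), hence by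
`C² α^{2(γ-1)}`. Since `2(γ-1) > -1`, this bound is integrable in `α` on `(0,1]`, and it does not
depend on `t`, so integrating over the bounded interval `[0,T]` only multiplies by `T`.
-/

open MeasureTheory Set

theorem sqrt_norm_sq_mul_norm_sq_sub_inner_sq_le {E : Type*} [NormedAddCommGroup E]
    [InnerProductSpace ℝ E] (x y : E) :
    √(‖x‖ ^ 2 * ‖y‖ ^ 2 - inner ℝ x y ^ 2) ≤ ‖x‖ * ‖y‖ :=
  Real.sqrt_le_iff.mpr ⟨by positivity, by nlinarith [sq_nonneg (inner ℝ x y)]⟩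

theorem sqrt_norm_sq_mul_norm_sq_sub_inner_sq_le_mul_rpow {E : Type*} [NormedAddCommGroup E]
    [InnerProductSpace ℝ E] {x y : E} {C a s : ℝ} (ha : 0 ≤ a)
    (hx : ‖x‖ ≤ C * a ^ s) (hy : ‖y‖ ≤ C * a ^ s) :
    √(‖x‖ ^ 2 * ‖y‖ ^ 2 - inner ℝ x y ^ 2) ≤ C ^ 2 * a ^ (2 * s) := by
  have hpow : a ^ (2 * s) = (a ^ s) ^ 2 := by
    rw [mul_comm]; exact_mod_cast Real.rpow_mul_natCast ha s 2
  calc _ ≤ ‖x‖ * ‖y‖ := sqrt_norm_sq_mul_norm_sq_sub_inner_sq_le x y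
    _ ≤ (C * a ^ s) * (C * a ^ s) := mul_le_mul hx hy (norm_nonneg _) ((norm_nonneg _).trans hx)
    _ = C ^ 2 * a ^ (2 * s) := by rw [hpow]; ring

theorem integrableOn_rpow_Ioc_zero {s t : ℝ} (hs : -1 < s) (ht : 0 ≤ t) :
    IntegrableOn (fun x : ℝ ↦ x ^ s) (Ioc 0 t) :=
  (intervalIntegrable_iff_integrableOn_Ioc_of_le ht).mp
    (intervalIntegral.intervalIntegrable_rpow' hs)

theorem setLIntegral_prod_comp_snd_lt_top {α β : Type*} [MeasurableSpace α] [MeasurableSpace β]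
    {μ : Measure α} {ν : Measure β} [SFinite μ] [SFinite ν] {s : Set α} {t : Set β}
    {f : β → ENNReal} (hs : μ s ≠ ⊤) (hf : ∫⁻ y in t, f y ∂ν ≠ ⊤) :
    ∫⁻ p in s ×ˢ t, f p.2 ∂μ.prod ν < ⊤ := by
  rw [← Measure.prod_restrict]
  refine (lintegral_prod_le _).trans_lt ?_
  dsimp only
  rw [lintegral_const, Measure.restrict_apply_univ]
  exact ENNReal.mul_lt_top hf.lt_top hs.lt_top

theorem stmt_4_general {d : ℕ} (γ T C : ℝ) (hγ : 1 / 2 < γ)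
    (Dt Dα : ℝ → ℝ → EuclideanSpace ℝ (Fin d))
    (hDt : ∀ t ∈ Set.Icc (0 : ℝ) T, ∀ α ∈ Set.Ioc (0 : ℝ) 1, ‖Dt t α‖ ≤ C * α ^ (γ - 1))
    (hDα : ∀ t ∈ Set.Icc (0 : ℝ) T, ∀ α ∈ Set.Ioc (0 : ℝ) 1, ‖Dα t α‖ ≤ C * α ^ (γ - 1)) :
    (∀ t ∈ Set.Icc (0 : ℝ) T, ∀ α ∈ Set.Ioc (0 : ℝ) 1,
        Real.sqrt (‖Dt t α‖ ^ 2 * ‖Dα t α‖ ^ 2 - (inner ℝ (Dt t α) (Dα t α) : ℝ) ^ 2)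
          ≤ C ^ 2 * α ^ (2 * (γ - 1))) ∧
      ∫⁻ p in Set.Icc (0 : ℝ) T ×ˢ Set.Ioc (0 : ℝ) 1,
          ENNReal.ofReal (Real.sqrt (‖Dt p.1 p.2‖ ^ 2 * ‖Dα p.1 p.2‖ ^ 2
            - (inner ℝ (Dt p.1 p.2) (Dα p.1 p.2) : ℝ) ^ 2)) < ⊤ := by
  have hJ : ∀ t ∈ Icc (0 : ℝ) T, ∀ α ∈ Ioc (0 : ℝ) 1,
      √(‖Dt t α‖ ^ 2 * ‖Dα t α‖ ^ 2 - inner ℝ (Dt t α) (Dα t α) ^ 2)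
        ≤ C ^ 2 * α ^ (2 * (γ - 1)) := fun t ht α hα ↦
    sqrt_norm_sq_mul_norm_sq_sub_inner_sq_le_mul_rpow hα.1.le (hDt t ht α hα) (hDα t ht α hα)
  refine ⟨hJ, ?_⟩
  have hbound : IntegrableOn (fun α : ℝ ↦ C ^ 2 * α ^ (2 * (γ - 1))) (Ioc 0 1) :=
    (integrableOn_rpow_Ioc_zero (by linarith) zero_le_one).const_mul _
  calc _ ≤ ∫⁻ p in Icc (0 : ℝ) T ×ˢ Ioc (0 : ℝ) 1, ENNReal.ofReal (C ^ 2 * p.2 ^ (2 * (γ - 1))) :=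
        setLIntegral_mono' (measurableSet_Icc.prod measurableSet_Ioc) fun p hp ↦
          ENNReal.ofReal_le_ofReal (hJ p.1 hp.1 p.2 hp.2)
    _ < ⊤ := setLIntegral_prod_comp_snd_lt_top measure_Icc_lt_top.ne hbound.lintegral_lt_top.ne

/-- given the mollification estimates `|∂_t X_{t,α}| ≤ C α^{γ-1}` and
`|∂_α X_{t,α}| ≤ C α^{γ-1}` with `γ > 1/2`, the area Jacobian
`J_f = √(|∂_t X|²|∂_α X|² − ⟨∂_t X, ∂_α X⟩²)` satisfies `J_f ≤ C² α^{2(γ-1)}`,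
and `∫_{[0,T]×(0,1]} J_f < ∞`. -/
theorem stmt_4 {d : ℕ} (γ T C : ℝ) (hγ : 1 / 2 < γ) (hγ1 : γ ≤ 1) (hT : 0 < T) (hC : 0 ≤ C)
    (Dt Dα : ℝ → ℝ → EuclideanSpace ℝ (Fin d))
    (hDt : ∀ t ∈ Set.Icc (0 : ℝ) T, ∀ α ∈ Set.Ioc (0 : ℝ) 1, ‖Dt t α‖ ≤ C * α ^ (γ - 1))
    (hDα : ∀ t ∈ Set.Icc (0 : ℝ) T, ∀ α ∈ Set.Ioc (0 : ℝ) 1, ‖Dα t α‖ ≤ C * α ^ (γ - 1)) :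
    (∀ t ∈ Set.Icc (0 : ℝ) T, ∀ α ∈ Set.Ioc (0 : ℝ) 1,
        Real.sqrt (‖Dt t α‖ ^ 2 * ‖Dα t α‖ ^ 2 - (inner ℝ (Dt t α) (Dα t α) : ℝ) ^ 2)
          ≤ C ^ 2 * α ^ (2 * (γ - 1))) ∧
      ∫⁻ p in Set.Icc (0 : ℝ) T ×ˢ Set.Ioc (0 : ℝ) 1,
          ENNReal.ofReal (Real.sqrt (‖Dt p.1 p.2‖ ^ 2 * ‖Dα p.1 p.2‖ ^ 2
            - (inner ℝ (Dt p.1 p.2) (Dα p.1 p.2) : ℝ) ^ 2)) < ⊤ :=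
  stmt_4_general γ T C hγ Dt Dα hDt hDα
end

section
/- Let X : [0,T] → ℝ^d be continuous and satisfy ∫₀^T∫₀^T |X_t−X_s|²/|t−s|² dt ds < ∞ together with ∫₀^T |X_T−X_s|/|T−s| ds < ∞ and ∫₀^T |X_0−X_s|/|s| ds < ∞ (the class W_C^{1/2,2}). Then the mollification X_{t,α} satisfies ∫₀^T ∫₀^1 (|∂_t X_{t,α}|² + |∂_α X_{t,α}|²) dt dα < ∞. -/
/-!
Both partial derivatives of the mollification are integrals of `X̃ s - X̃ t` against kernels
of size `O(α⁻²)` supported in `|s - t| ≤ α`, so by Cauchy–Schwarz their squared norms are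
`O(α⁻³ ∫_{|s-t| ≤ α} ‖X̃ s - X̃ t‖² ds)`. Integrating in `α` with Tonelli and
`∫_{|s-t|}^∞ α⁻³ dα = 1 / (2 |s - t|²)` bounds the energy by
`∫₀^T ∫_ℝ ‖X̃ s - X̃ t‖² / |s - t|² ds dt`. For `s ∈ [0,T]` this is the double-integral
hypothesis; outside `[0,T]` the extension is constant, the `s`-integral is explicitly
`‖X T - X t‖² / (T - t)` (resp. `‖X 0 - X t‖² / t`), and the boundedness of `X` reduces it to
the two one-sided hypotheses.
-/

open MeasureTheory Set Filter Topology Function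
open scoped ENNReal

theorem setLIntegral_Ioi_inv_sub_pow (n : ℕ) {a t : ℝ} (hta : t < a) :
    ∫⁻ s in Ioi a, ENNReal.ofReal ((s - t) ^ (n + 2))⁻¹
      = ENNReal.ofReal ((n + 1) * (a - t) ^ (n + 1))⁻¹ := by
  have hpos : ∀ s ∈ Ici a, 0 < s - t := fun s hs => sub_pos.2 (hta.trans_le hs)
  have hderiv : ∀ s ∈ Ici a, HasDerivAt (fun s => -((n + 1) * (s - t) ^ (n + 1))⁻¹)
      ((s - t) ^ (n + 2))⁻¹ s := by
    intro s hs
    have := hpos s hs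
    refine ((((hasDerivAt_id' s).sub_const t).fun_pow (n + 1)).const_mul ((n : ℝ) + 1)
      |>.fun_inv (by positivity) |>.fun_neg).congr_deriv ?_
    rw [Nat.add_sub_cancel]
    field_simp
    push_cast
    ring
  have hlim : Tendsto (fun s => -((n + 1) * (s - t) ^ (n + 1))⁻¹) atTop (𝓝 0) := by
    rw [← neg_zero]
    refine (tendsto_inv_atTop_zero.comp ?_).neg
    refine Tendsto.const_mul_atTop (by positivity) (tendsto_pow_atTop (by omega) |>.comp ?_)
    exact tendsto_atTop_add_const_right _ _ tendsto_id
  have hnonneg : ∀ s ∈ Ioi a, 0 ≤ ((s - t) ^ (n + 2))⁻¹ :=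
    fun s hs => by have := hpos s (mem_Ici_of_Ioi hs); positivity
  rw [← ofReal_integral_eq_lintegral_ofReal
      (integrableOn_Ioi_deriv_of_nonneg' hderiv hnonneg hlim)
      ((ae_restrict_iff' measurableSet_Ioi).2 (ae_of_all _ hnonneg)),
    integral_Ioi_of_hasDerivAt_of_nonneg' hderiv hnonneg hlim, zero_sub, neg_neg]

theorem setLIntegral_Iio_inv_sub_sq {a t : ℝ} (hat : a < t) :
    ∫⁻ s in Iio a, ENNReal.ofReal ((s - t) ^ 2)⁻¹ = ENNReal.ofReal (t - a)⁻¹ := by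
  rw [← (Measure.measurePreserving_neg volume).setLIntegral_comp_preimage_emb
    (Homeomorph.neg ℝ).measurableEmbedding, Set.neg_preimage, Set.neg_Iio]
  convert setLIntegral_Ioi_inv_sub_pow 0 (neg_lt_neg hat) using 3 with s <;> push_cast <;> ring_nf

theorem setLIntegral_Ioi_inv_pow_three {r : ℝ} (hr : 0 < r) :
    ∫⁻ α in Ioi r, ENNReal.ofReal (α ^ 3)⁻¹ = 2⁻¹ * ENNReal.ofReal (r ^ 2)⁻¹ := by
  have := setLIntegral_Ioi_inv_sub_pow 1 hr
  norm_num at this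
  rw [this, mul_comm, ENNReal.ofReal_mul (by norm_num), one_div,
    ENNReal.ofReal_inv_of_pos two_pos, ENNReal.ofReal_ofNat]

theorem lintegral_Ioi_inv_pow_three_mul_setLIntegral_Icc {g : ℝ → ℝ≥0∞} (hg : Measurable g)
    {t : ℝ} (hgt : g t = 0) :
    ∫⁻ α in Ioi 0, ENNReal.ofReal (α ^ 3)⁻¹ * ∫⁻ s in Icc (t - α) (t + α), g s
      = 2⁻¹ * ∫⁻ s, g s * ENNReal.ofReal ((s - t) ^ 2)⁻¹ := by
  set F : ℝ → ℝ → ℝ≥0∞ := fun α s => if |s - t| ≤ α then ENNReal.ofReal (α ^ 3)⁻¹ * g s else 0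
  have hF : Measurable (uncurry F) :=
    Measurable.ite (measurableSet_le (by fun_prop) (by fun_prop)) (by fun_prop) measurable_const
  have hα : ∀ α, ENNReal.ofReal (α ^ 3)⁻¹ * ∫⁻ s in Icc (t - α) (t + α), g s = ∫⁻ s, F α s := by
    intro α
    rw [← lintegral_const_mul' _ _ ENNReal.ofReal_ne_top, ← lintegral_indicator measurableSet_Icc]
    congr with s
    have hmem : s ∈ Icc (t - α) (t + α) ↔ |s - t| ≤ α := by
      rw [mem_Icc, abs_le]; constructor <;> intro h <;> constructor <;> linarith [h.1, h.2]
    simp only [indicator_apply, hmem, F]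
  have hs : ∀ s, ∫⁻ α in Ioi 0, F α s = 2⁻¹ * (g s * ENNReal.ofReal ((s - t) ^ 2)⁻¹) := by
    intro s
    rcases eq_or_ne s t with rfl | hst
    · simp [F, hgt]
    have hr : 0 < |s - t| := abs_pos.2 (sub_ne_zero.2 hst)
    calc ∫⁻ α in Ioi 0, F α s
        = ∫⁻ α in Ioi 0, (Ici |s - t|).indicator (fun α => g s * ENNReal.ofReal (α ^ 3)⁻¹) α := by
          congr with α
          simp only [F, indicator_apply, mem_Ici, mul_comm]
      _ = g s * ∫⁻ α in Ioi |s - t|, ENNReal.ofReal (α ^ 3)⁻¹ := by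
          rw [lintegral_indicator measurableSet_Ici, Measure.restrict_restrict measurableSet_Ici,
            inter_eq_left.2 (Ici_subset_Ioi.2 hr), setLIntegral_congr Ioi_ae_eq_Ici.symm,
            lintegral_const_mul _ (by fun_prop)]
      _ = _ := by
          rw [setLIntegral_Ioi_inv_pow_three hr, sq_abs]
          ring
  simp_rw [hα]
  rw [lintegral_lintegral_swap hF.aemeasurable, ← lintegral_const_mul' _ _ (by simp)]
  simp_rw [hs]

theorem sq_lintegral_le_measure_univ_mul_lintegral_sq {α : Type*} [MeasurableSpace α]
    (μ : Measure α) {f : α → ℝ≥0∞} (hf : AEMeasurable f μ) :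
    (∫⁻ x, f x ∂μ) ^ 2 ≤ μ univ * ∫⁻ x, f x ^ 2 ∂μ := by
  have hpq : Real.HolderConjugate 2 2 := ⟨by norm_num, by norm_num, by norm_num⟩
  have h := ENNReal.lintegral_mul_le_Lp_mul_Lq μ hpq hf (aemeasurable_const (b := (1 : ℝ≥0∞)))
  simp only [Pi.mul_apply, mul_one, ENNReal.one_rpow, lintegral_const, one_mul] at h
  calc (∫⁻ x, f x ∂μ) ^ 2
      ≤ ((∫⁻ x, f x ^ (2 : ℝ) ∂μ) ^ (1 / (2 : ℝ)) * μ univ ^ (1 / (2 : ℝ))) ^ 2 := by gcongr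
    _ = μ univ * ∫⁻ x, f x ^ 2 ∂μ := by
        rw [mul_pow, ← ENNReal.rpow_natCast _ 2, ← ENNReal.rpow_natCast (_ ^ _) 2,
          ← ENNReal.rpow_mul, ← ENNReal.rpow_mul, mul_comm]
        norm_num

theorem abs_add_mul_le_two_mul {η η' : ℝ → ℝ} {D : ℝ} (hηD : ∀ u, |η u| ≤ D)
    (hη'D : ∀ u, |η' u| ≤ D) (hη' : support η' ⊆ Icc (-1) 1) (u : ℝ) :
    |η u + u * η' u| ≤ 2 * D := by
  calc |η u + u * η' u| ≤ |η u| + |u| * |η' u| := by rw [← abs_mul]; exact abs_add_le _ _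
    _ ≤ D + 1 * D := by
        refine add_le_add (hηD u) ?_
        by_cases hu : u ∈ Icc (-1 : ℝ) 1
        · exact mul_le_mul (abs_le.2 hu) (hη'D u) (abs_nonneg _) zero_le_one
        · rw [notMem_support.1 fun h => hu (hη' h), abs_zero, mul_zero, one_mul]
          exact (abs_nonneg _).trans (hηD u)
    _ = 2 * D := by ring

section

variable {E : Type*} [NormedAddCommGroup E]

theorem setLIntegral_Ioi_enorm_sub_sq_mul_inv_sq {Y : ℝ → E} {a t : ℝ}
    (hY : ∀ s, a ≤ s → Y s = Y a) (hta : t ≤ a) :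
    ∫⁻ s in Ioi a, ‖Y s - Y t‖ₑ ^ 2 * ENNReal.ofReal ((s - t) ^ 2)⁻¹
      = ‖Y a - Y t‖ₑ ^ 2 * ENNReal.ofReal (a - t)⁻¹ := by
  rw [setLIntegral_congr_fun measurableSet_Ioi fun s hs => by rw [hY s (le_of_lt hs)],
    lintegral_const_mul _ (by fun_prop)]
  rcases hta.eq_or_lt with rfl | hta
  · simp
  simpa using congrArg (‖Y a - Y t‖ₑ ^ 2 * ·) (setLIntegral_Ioi_inv_sub_pow 0 hta)

theorem setLIntegral_Iio_enorm_sub_sq_mul_inv_sq {Y : ℝ → E} {a t : ℝ}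
    (hY : ∀ s, s ≤ a → Y s = Y a) (hat : a ≤ t) :
    ∫⁻ s in Iio a, ‖Y s - Y t‖ₑ ^ 2 * ENNReal.ofReal ((s - t) ^ 2)⁻¹
      = ‖Y a - Y t‖ₑ ^ 2 * ENNReal.ofReal (t - a)⁻¹ := by
  rw [setLIntegral_congr_fun measurableSet_Iio fun s hs => by rw [hY s (le_of_lt hs)],
    lintegral_const_mul _ (by fun_prop)]
  rcases hat.eq_or_lt with rfl | hat
  · simp
  rw [setLIntegral_Iio_inv_sub_sq hat]

theorem enorm_sq_mul_ofReal_inv_le {z : E} {B : ℝ} (hz : ‖z‖ ≤ B) (r : ℝ) :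
    ‖z‖ₑ ^ 2 * ENNReal.ofReal r⁻¹ ≤ ENNReal.ofReal B * ENNReal.ofReal (‖z‖ / |r|) := by
  rw [← ofReal_norm, ← ENNReal.ofReal_pow (norm_nonneg _), ← ENNReal.ofReal_mul (by positivity),
    ← ENNReal.ofReal_mul ((norm_nonneg _).trans hz)]
  refine ENNReal.ofReal_le_ofReal ?_
  calc ‖z‖ ^ 2 * r⁻¹ ≤ ‖z‖ ^ 2 * |r|⁻¹ :=
        mul_le_mul_of_nonneg_left ((le_abs_self _).trans_eq (abs_inv r)) (by positivity)
    _ ≤ B * ‖z‖ * |r|⁻¹ := by gcongr; nlinarith [norm_nonneg z]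
    _ = B * (‖z‖ / |r|) := by ring

theorem setLIntegral_lintegral_enorm_clamp_sub_sq_mul_inv_sq_lt_top {T : ℝ} (hT : 0 ≤ T)
    {X : ℝ → E} (hX : Continuous X)
    (h1 : ∫⁻ p in Icc 0 T ×ˢ Icc 0 T, ENNReal.ofReal (‖X p.1 - X p.2‖ ^ 2 / |p.1 - p.2| ^ 2) < ⊤)
    (h2 : ∫⁻ s in Icc 0 T, ENNReal.ofReal (‖X T - X s‖ / |T - s|) < ⊤)
    (h3 : ∫⁻ s in Icc 0 T, ENNReal.ofReal (‖X 0 - X s‖ / |s|) < ⊤) :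
    ∫⁻ t in Icc 0 T, ∫⁻ s, ‖X (min T (max 0 s)) - X (min T (max 0 t))‖ₑ ^ 2
      * ENNReal.ofReal ((s - t) ^ 2)⁻¹ < ⊤ := by
  set Y : ℝ → E := fun r => X (min T (max 0 r))
  have hYX : ∀ t ∈ Icc 0 T, Y t = X t := fun t ht => by
    simp only [Y, max_eq_right ht.1, min_eq_right ht.2]
  have hY0 : ∀ s ≤ 0, Y s = Y 0 := fun s hs => by simp only [Y, max_eq_left hs, max_self]
  have hYT : ∀ s, T ≤ s → Y s = Y T := fun s hs => by
    simp only [Y, min_eq_left (hs.trans (le_max_right 0 s)), max_eq_right hT, min_self]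
  obtain ⟨M, hM⟩ := isCompact_Icc.exists_bound_of_continuousOn (hX.continuousOn (s := Icc 0 T))
  have hXdiff : ∀ a ∈ Icc 0 T, ∀ t ∈ Icc 0 T, ‖X a - X t‖ ≤ 2 * M := fun a ha t ht => by
    linarith [norm_sub_le (X a) (X t), hM a ha, hM t ht]
  have h0 : (0 : ℝ) ∈ Icc 0 T := left_mem_Icc.2 hT
  have hT' : T ∈ Icc 0 T := right_mem_Icc.2 hT
  have hsplit : ∀ t ∈ Icc 0 T, ∫⁻ s, ‖Y s - Y t‖ₑ ^ 2 * ENNReal.ofReal ((s - t) ^ 2)⁻¹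
      ≤ ENNReal.ofReal (2 * M) * ENNReal.ofReal (‖X 0 - X t‖ / |t|)
        + (∫⁻ s in Icc 0 T, ENNReal.ofReal (‖X t - X s‖ ^ 2 / |t - s| ^ 2))
        + ENNReal.ofReal (2 * M) * ENNReal.ofReal (‖X T - X t‖ / |T - t|) := by
    intro t ht
    calc ∫⁻ s, ‖Y s - Y t‖ₑ ^ 2 * ENNReal.ofReal ((s - t) ^ 2)⁻¹
        = ∫⁻ s in Iio 0 ∪ Icc 0 T ∪ Ioi T, ‖Y s - Y t‖ₑ ^ 2 * ENNReal.ofReal ((s - t) ^ 2)⁻¹ := by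
          rw [Iio_union_Icc_eq_Iic hT, Iic_union_Ioi, Measure.restrict_univ]
      _ ≤ (∫⁻ s in Iio 0, ‖Y s - Y t‖ₑ ^ 2 * ENNReal.ofReal ((s - t) ^ 2)⁻¹)
          + (∫⁻ s in Icc 0 T, ‖Y s - Y t‖ₑ ^ 2 * ENNReal.ofReal ((s - t) ^ 2)⁻¹)
          + ∫⁻ s in Ioi T, ‖Y s - Y t‖ₑ ^ 2 * ENNReal.ofReal ((s - t) ^ 2)⁻¹ :=
          (lintegral_union_le _ _ _).trans (add_le_add_left (lintegral_union_le _ _ _) _)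
      _ ≤ _ := by
          gcongr ?_ + ?_ + ?_
          · rw [setLIntegral_Iio_enorm_sub_sq_mul_inv_sq hY0 ht.1, hYX 0 h0, hYX t ht, sub_zero]
            exact enorm_sq_mul_ofReal_inv_le (hXdiff 0 h0 t ht) t
          · refine setLIntegral_mono' measurableSet_Icc fun s hs => le_of_eq ?_
            rw [hYX s hs, hYX t ht, ← ofReal_norm, ← ENNReal.ofReal_pow (norm_nonneg _),
              ← ENNReal.ofReal_mul (by positivity), norm_sub_rev, ← sq_abs (s - t), abs_sub_comm,
              div_eq_mul_inv]
          · rw [setLIntegral_Ioi_enorm_sub_sq_mul_inv_sq hYT ht.2, hYX T hT', hYX t ht]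
            exact enorm_sq_mul_ofReal_inv_le (hXdiff T hT' t ht) (T - t)
  have hdiag : ∫⁻ t in Icc 0 T, ∫⁻ s in Icc 0 T, ENNReal.ofReal (‖X t - X s‖ ^ 2 / |t - s| ^ 2)
      = ∫⁻ p in Icc 0 T ×ˢ Icc 0 T, ENNReal.ofReal (‖X p.1 - X p.2‖ ^ 2 / |p.1 - p.2| ^ 2) := by
    rw [Measure.volume_eq_prod, setLIntegral_prod _ (by fun_prop)]
  calc _ ≤ ∫⁻ t in Icc 0 T, (ENNReal.ofReal (2 * M) * ENNReal.ofReal (‖X 0 - X t‖ / |t|)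
        + (∫⁻ s in Icc 0 T, ENNReal.ofReal (‖X t - X s‖ ^ 2 / |t - s| ^ 2))
        + ENNReal.ofReal (2 * M) * ENNReal.ofReal (‖X T - X t‖ / |T - t|)) :=
        setLIntegral_mono' measurableSet_Icc hsplit
    _ = ENNReal.ofReal (2 * M) * (∫⁻ t in Icc 0 T, ENNReal.ofReal (‖X 0 - X t‖ / |t|))
        + (∫⁻ p in Icc 0 T ×ˢ Icc 0 T, ENNReal.ofReal (‖X p.1 - X p.2‖ ^ 2 / |p.1 - p.2| ^ 2))
        + ENNReal.ofReal (2 * M) * ∫⁻ t in Icc 0 T, ENNReal.ofReal (‖X T - X t‖ / |T - t|) := by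
        rw [lintegral_add_right _ (by fun_prop), lintegral_add_left (by fun_prop), hdiag,
          lintegral_const_mul' _ _ ENNReal.ofReal_ne_top,
          lintegral_const_mul' _ _ ENNReal.ofReal_ne_top]
    _ < ⊤ := by finiteness

variable [NormedSpace ℝ E]

theorem enorm_integral_smul_sq_le {α : Type*} [MeasurableSpace α] {μ : Measure α} {S : Set α}
    {K : α → ℝ} {c : ℝ} (hKc : ∀ x, |K x| ≤ c) (hKS : support K ⊆ S) {f : α → E}
    (hf : AEStronglyMeasurable f (μ.restrict S)) :
    ‖∫ x, K x • f x ∂μ‖ₑ ^ 2 ≤ ENNReal.ofReal c ^ 2 * μ S * ∫⁻ x in S, ‖f x‖ₑ ^ 2 ∂μ := by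
  have hL1 : ‖∫ x, K x • f x ∂μ‖ₑ ≤ ENNReal.ofReal c * ∫⁻ x in S, ‖f x‖ₑ ∂μ := by
    have hsupp : support (fun x => ‖K x • f x‖ₑ) ⊆ S := fun x hx =>
      hKS fun hK => hx (by simp [hK])
    calc ‖∫ x, K x • f x ∂μ‖ₑ ≤ ∫⁻ x, ‖K x • f x‖ₑ ∂μ := enorm_integral_le_lintegral_enorm _
      _ = ∫⁻ x in S, ‖K x‖ₑ * ‖f x‖ₑ ∂μ := by
          rw [← setLIntegral_eq_of_support_subset hsupp]
          simp only [enorm_smul]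
      _ ≤ ∫⁻ x in S, ENNReal.ofReal c * ‖f x‖ₑ ∂μ := by
          gcongr with x
          rw [Real.enorm_eq_ofReal_abs]
          exact ENNReal.ofReal_le_ofReal (hKc x)
      _ = ENNReal.ofReal c * ∫⁻ x in S, ‖f x‖ₑ ∂μ := lintegral_const_mul' _ _ ENNReal.ofReal_ne_top
  calc ‖∫ x, K x • f x ∂μ‖ₑ ^ 2 ≤ ENNReal.ofReal c ^ 2 * (∫⁻ x in S, ‖f x‖ₑ ∂μ) ^ 2 := by
        rw [← mul_pow]; gcongr
    _ ≤ ENNReal.ofReal c ^ 2 * (μ S * ∫⁻ x in S, ‖f x‖ₑ ^ 2 ∂μ) := by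
        gcongr
        simpa using sq_lintegral_le_measure_univ_mul_lintegral_sq _ hf.enorm
    _ = _ := (mul_assoc _ _ _).symm

theorem enorm_integral_dilate_smul_sq_le {φ : ℝ → ℝ} {c : ℝ} (hφc : ∀ u, |φ u| ≤ c)
    (hφ : support φ ⊆ Icc (-1) 1) {f : ℝ → E} (hf : AEStronglyMeasurable f) (t : ℝ) {α : ℝ}
    (hα : 0 < α) :
    ‖∫ s, ((α ^ 2)⁻¹ * φ ((t - s) / α)) • f s‖ₑ ^ 2
      ≤ ENNReal.ofReal (2 * c ^ 2 / α ^ 3) * ∫⁻ s in Icc (t - α) (t + α), ‖f s‖ₑ ^ 2 := by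
  have hc : 0 ≤ c := (abs_nonneg _).trans (hφc 0)
  have hK : ∀ s, |(α ^ 2)⁻¹ * φ ((t - s) / α)| ≤ c / α ^ 2 := fun s => by
    rw [abs_mul, abs_of_pos (by positivity), inv_mul_eq_div]
    exact div_le_div_of_nonneg_right (hφc _) (by positivity)
  have hKS : support (fun s => (α ^ 2)⁻¹ * φ ((t - s) / α)) ⊆ Icc (t - α) (t + α) := by
    intro s hs
    have hu := hφ (right_ne_zero_of_mul hs)
    rw [mem_Icc, le_div_iff₀ hα, div_le_iff₀ hα] at hu
    constructor <;> linarith [hu.1, hu.2]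
  refine (enorm_integral_smul_sq_le hK hKS hf.restrict).trans_eq ?_
  rw [Real.volume_Icc, ← ENNReal.ofReal_pow (by positivity), ← ENNReal.ofReal_mul (by positivity)]
  congr 2
  field_simp
  ring

/-- With `f s = X̃ s - X̃ t` and `η' = deriv η` the two integrals are `∂_t X_{t,α}` and
`∂_α X_{t,α}`. -/
theorem ofReal_norm_sq_add_norm_sq_mollifier_partials_le {η η' : ℝ → ℝ} {D : ℝ}
    (hηD : ∀ u, |η u| ≤ D) (hη'D : ∀ u, |η' u| ≤ D) (hη : support η ⊆ Icc (-1) 1)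
    (hη' : support η' ⊆ Icc (-1) 1) {f : ℝ → E} (hf : AEStronglyMeasurable f) (t : ℝ) {α : ℝ}
    (hα : 0 < α) :
    ENNReal.ofReal (‖∫ s, (-(α ^ 2)⁻¹ * η' ((t - s) / α)) • f s‖ ^ 2
        + ‖∫ s, (-(α ^ 2)⁻¹ * η ((t - s) / α) - ((t - s) / α ^ 3) * η' ((t - s) / α)) • f s‖ ^ 2)
      ≤ ENNReal.ofReal (10 * D ^ 2) * (ENNReal.ofReal (α ^ 3)⁻¹
          * ∫⁻ s in Icc (t - α) (t + α), ‖f s‖ₑ ^ 2) := by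
  have h₁ := enorm_integral_dilate_smul_sq_le (φ := fun u => -η' u) (c := D)
    (fun u => by simpa using hη'D u) (by simpa using hη') hf t hα
  have h₂ := enorm_integral_dilate_smul_sq_le (φ := fun u => -(η u + u * η' u)) (c := 2 * D)
    (fun u => (abs_neg _).trans_le (abs_add_mul_le_two_mul hηD hη'D hη' u))
    ((support_neg fun u => η u + u * η' u).trans_subset <|
      (support_add _ _).trans (union_subset hη ((support_mul_subset_right _ _).trans hη'))) hf t hα
  have e₁ : ∫ s, (-(α ^ 2)⁻¹ * η' ((t - s) / α)) • f s
      = ∫ s, ((α ^ 2)⁻¹ * -η' ((t - s) / α)) • f s := by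
    congr with s; congr 1; ring
  have e₂ : ∫ s, (-(α ^ 2)⁻¹ * η ((t - s) / α) - ((t - s) / α ^ 3) * η' ((t - s) / α)) • f s
      = ∫ s, ((α ^ 2)⁻¹ * -(η ((t - s) / α) + (t - s) / α * η' ((t - s) / α))) • f s := by
    congr with s; congr 1; field_simp; ring
  rw [ENNReal.ofReal_add (by positivity) (by positivity), ENNReal.ofReal_pow (norm_nonneg _),
    ENNReal.ofReal_pow (norm_nonneg _), ofReal_norm, ofReal_norm, e₁, e₂]
  refine (add_le_add h₁ h₂).trans_eq ?_
  rw [← add_mul, ← ENNReal.ofReal_add (by positivity) (by positivity), ← mul_assoc,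
    ← ENNReal.ofReal_mul (by positivity)]
  congr 2
  field_simp
  ring

theorem setLIntegral_prod_Ioi_mollifier_partials_le {η η' : ℝ → ℝ} {D : ℝ}
    (hηD : ∀ u, |η u| ≤ D) (hη'D : ∀ u, |η' u| ≤ D) (hη : support η ⊆ Icc (-1) 1)
    (hη' : support η' ⊆ Icc (-1) 1) {Y : ℝ → E} (hY : Continuous Y) (S : Set ℝ) :
    ∫⁻ p in S ×ˢ Ioi 0,
      ENNReal.ofReal (‖∫ s, (-(p.2 ^ 2)⁻¹ * η' ((p.1 - s) / p.2)) • (Y s - Y p.1)‖ ^ 2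
        + ‖∫ s, (-(p.2 ^ 2)⁻¹ * η ((p.1 - s) / p.2) - ((p.1 - s) / p.2 ^ 3) * η' ((p.1 - s) / p.2))
            • (Y s - Y p.1)‖ ^ 2)
      ≤ ENNReal.ofReal (10 * D ^ 2) * 2⁻¹
        * ∫⁻ t in S, ∫⁻ s, ‖Y s - Y t‖ₑ ^ 2 * ENNReal.ofReal ((s - t) ^ 2)⁻¹ := by
  have hα : ∀ t, ∫⁻ α in Ioi 0, ENNReal.ofReal (α ^ 3)⁻¹ * ∫⁻ s in Icc (t - α) (t + α),
      ‖Y s - Y t‖ₑ ^ 2 = 2⁻¹ * ∫⁻ s, ‖Y s - Y t‖ₑ ^ 2 * ENNReal.ofReal ((s - t) ^ 2)⁻¹ :=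
    fun t => lintegral_Ioi_inv_pow_three_mul_setLIntegral_Icc
      ((hY.sub continuous_const).enorm.measurable.pow_const 2) (by simp)
  rw [Measure.volume_eq_prod, ← Measure.prod_restrict]
  calc _ ≤ ∫⁻ t in S, ∫⁻ α in Ioi 0, ENNReal.ofReal (10 * D ^ 2)
          * (ENNReal.ofReal (α ^ 3)⁻¹ * ∫⁻ s in Icc (t - α) (t + α), ‖Y s - Y t‖ₑ ^ 2) :=
        (lintegral_prod_le _).trans <| lintegral_mono fun t =>
          setLIntegral_mono' measurableSet_Ioi fun α hα =>
            ofReal_norm_sq_add_norm_sq_mollifier_partials_le hηD hη'D hη hη'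
              (hY.sub continuous_const).aestronglyMeasurable t hα
    _ = _ := by
        simp_rw [lintegral_const_mul' _ _ ENNReal.ofReal_ne_top, hα,
          lintegral_const_mul' _ _ (ENNReal.inv_ne_top.2 two_ne_zero), mul_assoc]

end

theorem stmt_12_general {d : ℕ} (T : ℝ) (hT : 0 < T)
    (X : ℝ → EuclideanSpace ℝ (Fin d)) (hX : Continuous X)
    (h1 : ∫⁻ p in Set.Icc (0 : ℝ) T ×ˢ Set.Icc (0 : ℝ) T,
        ENNReal.ofReal (‖X p.1 - X p.2‖ ^ 2 / |p.1 - p.2| ^ 2) < ⊤)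
    (h2 : ∫⁻ s in Set.Icc (0 : ℝ) T, ENNReal.ofReal (‖X T - X s‖ / |T - s|) < ⊤)
    (h3 : ∫⁻ s in Set.Icc (0 : ℝ) T, ENNReal.ofReal (‖X 0 - X s‖ / |s|) < ⊤)
    (η : ℝ → ℝ) (hη : ContDiff ℝ 1 η)
    (hsupp : Function.support η ⊆ Set.Icc (-1 : ℝ) 1) :
    ∫⁻ p in Set.Icc (0 : ℝ) T ×ˢ Set.Ioc (0 : ℝ) 1,
      ENNReal.ofReal
        (‖∫ s, (-(p.2 ^ 2)⁻¹ * deriv η ((p.1 - s) / p.2))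
            • (X (min T (max 0 s)) - X (min T (max 0 p.1)))‖ ^ 2
          + ‖∫ s, (-(p.2 ^ 2)⁻¹ * η ((p.1 - s) / p.2)
                - ((p.1 - s) / p.2 ^ 3) * deriv η ((p.1 - s) / p.2))
              • (X (min T (max 0 s)) - X (min T (max 0 p.1)))‖ ^ 2) < ⊤ := by
  have htsupp : tsupport η ⊆ Icc (-1) 1 := closure_minimal hsupp isClosed_Icc
  have hηc : HasCompactSupport η := isCompact_Icc.of_isClosed_subset (isClosed_tsupport η) htsupp
  obtain ⟨D₁, hD₁⟩ := hη.continuous.bounded_above_of_compact_support hηc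
  obtain ⟨D₂, hD₂⟩ := (hη.continuous_deriv le_rfl).bounded_above_of_compact_support hηc.deriv
  calc _ ≤ _ := lintegral_mono_set (prod_mono subset_rfl Ioc_subset_Ioi_self)
    _ ≤ _ := setLIntegral_prod_Ioi_mollifier_partials_le (D := max D₁ D₂)
          (fun u => (Real.norm_eq_abs _ ▸ hD₁ u).trans (le_max_left _ _))
          (fun u => (Real.norm_eq_abs _ ▸ hD₂ u).trans (le_max_right _ _)) hsupp
          (support_deriv_subset.trans htsupp) (hX.comp (by fun_prop)) _
    _ < ⊤ := ENNReal.mul_lt_top (by finiteness)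
        (setLIntegral_lintegral_enorm_clamp_sub_sq_mul_inv_sq_lt_top hT.le hX h1 h2 h3)

/-- if a continuous `X : [0,T] → ℝ^d` lies in the class `W_C^{1/2,2}`
(the three integral conditions below), then the mollification (built from the extension
of `X` by constants outside `[0,T]`) has square-integrable partial derivatives:
`∫₀^T ∫₀^1 (|∂_t X_{t,α}|² + |∂_α X_{t,α}|²) dt dα < ∞`. -/
theorem stmt_12 {d : ℕ} (T : ℝ) (hT : 0 < T)
    (X : ℝ → EuclideanSpace ℝ (Fin d)) (hX : Continuous X)
    (h1 : ∫⁻ p in Set.Icc (0 : ℝ) T ×ˢ Set.Icc (0 : ℝ) T,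
        ENNReal.ofReal (‖X p.1 - X p.2‖ ^ 2 / |p.1 - p.2| ^ 2) < ⊤)
    (h2 : ∫⁻ s in Set.Icc (0 : ℝ) T, ENNReal.ofReal (‖X T - X s‖ / |T - s|) < ⊤)
    (h3 : ∫⁻ s in Set.Icc (0 : ℝ) T, ENNReal.ofReal (‖X 0 - X s‖ / |s|) < ⊤)
    (η : ℝ → ℝ) (hη : ContDiff ℝ 1 η)
    (hsupp : Function.support η ⊆ Set.Icc (-1 : ℝ) 1)
    (hone : ∫ u, η u = 1) :
    ∫⁻ p in Set.Icc (0 : ℝ) T ×ˢ Set.Ioc (0 : ℝ) 1,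
      ENNReal.ofReal
        (‖∫ s, (-(p.2 ^ 2)⁻¹ * deriv η ((p.1 - s) / p.2))
            • (X (min T (max 0 s)) - X (min T (max 0 p.1)))‖ ^ 2
          + ‖∫ s, (-(p.2 ^ 2)⁻¹ * η ((p.1 - s) / p.2)
                - ((p.1 - s) / p.2 ^ 3) * deriv η ((p.1 - s) / p.2))
              • (X (min T (max 0 s)) - X (min T (max 0 p.1)))‖ ^ 2) < ⊤ :=
  stmt_12_general T hT X hX h1 h2 h3 η hη hsupp
end
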